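/- Let u be the landscape function for H = -Δ + V on the torus Ω, and suppose ψ ∈ H^1 ∩ L^∞ is an eigenfunction with eigenvalue λ and ‖ψ‖_{L^∞} = 1/λ (with λ > 0). Then |ψ(x)| ≤ u(x) pointwise a.e., hence ‖ψ‖_{L^2} ≤ ‖u‖_{L^2}. -/

import Mathlib

open MeasureTheory

noncomputable section

/-- The `i`-th coordinate unit vector in `ℝⁿ`. -/
def eVec (n : ℕ) (i : Fin n) : EuclideanSpace ℝ (Fin n) := EuclideanSpace.single i 1

/-- Periodicity with respect to the unit lattice `ℤⁿ` (torus boundary conditions). -/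
def per {n : ℕ} (f : EuclideanSpace ℝ (Fin n) → ℝ) : Prop :=
  ∀ (x : EuclideanSpace ℝ (Fin n)) (i : Fin n), f (x + eVec n i) = f x

/-- A fundamental domain `Q = [0,1)ⁿ` of the torus. -/
def Qd (n : ℕ) : Set (EuclideanSpace ℝ (Fin n)) :=
  {x | ∀ i, x i ∈ Set.Ico (0:ℝ) 1}

/-- The Laplacian `Δf = ∑ᵢ ∂²f/∂xᵢ²`. -/
def lap {n : ℕ} (f : EuclideanSpace ℝ (Fin n) → ℝ) (x : EuclideanSpace ℝ (Fin n)) : ℝ :=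
  ∑ i, fderiv ℝ (fun y => fderiv ℝ f y (eVec n i)) x (eVec n i)

/-!
Let `x₀` maximize the periodic ratio `ψ / u` and put `m = ψ x₀ / u x₀`. Then `m u - ψ ≥ 0` vanishes
at `x₀`, so `Δ (m u - ψ) x₀ ≥ 0`. Subtracting `m` times the landscape equation from the eigenvalue
equation at `x₀`, where the potential terms cancel because `ψ x₀ = m u x₀`, gives
`m ≤ λ ψ x₀ ≤ λ ‖ψ‖_∞ = 1`, hence `ψ ≤ m u ≤ u`. The same applies to `-ψ`.
-/

open Filter Topology

/-- If `f'' a < 0`, the second-derivative test would make `a` also a local maximum, so `f` would be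
locally constant near `a`. -/
theorem IsLocalMin.deriv_deriv_nonneg {f : ℝ → ℝ} {a : ℝ} (h : IsLocalMin f a)
    (hc : ContinuousAt f a) : 0 ≤ deriv (deriv f) a := by
  by_contra! hneg
  have hconst : f =ᶠ[𝓝 a] fun _ => f a :=
    (h.and (isLocalMax_of_deriv_deriv_neg hneg h.deriv_eq_zero hc)).mono
      fun x hx => le_antisymm hx.2 hx.1
  have hzero : deriv (deriv f) a = 0 := by
    rw [hconst.deriv.deriv_eq, deriv_const', deriv_const]
  exact hneg.ne hzero

section Directional

variable {F : Type*} [NormedAddCommGroup F] [NormedSpace ℝ F]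

theorem ContDiff.differentiable_fderiv_apply {f : F → ℝ} (hf : ContDiff ℝ 2 f) (e : F) :
    Differentiable ℝ fun y => fderiv ℝ f y e :=
  ((hf.fderiv_right (m := 1) le_rfl).clm_apply contDiff_const).differentiable one_ne_zero

theorem deriv_comp_add_smul {f : F → ℝ} (hf : Differentiable ℝ f) (x e : F) :
    deriv (fun t : ℝ => f (x + t • e)) = fun t => fderiv ℝ f (x + t • e) e := by
  ext t
  have hline : HasDerivAt (fun s : ℝ => x + s • e) e t := by
    simpa using ((hasDerivAt_id t).smul_const e).const_add x
  exact ((hf _).hasFDerivAt.comp_hasDerivAt t hline).deriv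

theorem deriv_deriv_comp_add_smul {f : F → ℝ} (hf : ContDiff ℝ 2 f) (x e : F) :
    deriv (deriv fun t : ℝ => f (x + t • e)) 0 = fderiv ℝ (fun y => fderiv ℝ f y e) x e := by
  rw [deriv_comp_add_smul (hf.differentiable two_ne_zero),
    deriv_comp_add_smul (hf.differentiable_fderiv_apply e)]
  simp

theorem IsLocalMin.fderiv_fderiv_apply_nonneg {f : F → ℝ} {a : F} (h : IsLocalMin f a)
    (hf : ContDiff ℝ 2 f) (e : F) : 0 ≤ fderiv ℝ (fun y => fderiv ℝ f y e) a e := by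
  have hline : Continuous fun t : ℝ => a + t • e := by fun_prop
  have hmin : IsLocalMin (fun t : ℝ => f (a + t • e)) 0 :=
    IsLocalMin.comp_continuous (g := fun t : ℝ => a + t • e) (by simpa using h) hline.continuousAt
  rw [← deriv_deriv_comp_add_smul hf]
  exact hmin.deriv_deriv_nonneg (hf.continuous.comp hline).continuousAt

end Directional

section Laplacian

variable {n : ℕ}

theorem lap_const_mul (c : ℝ) (f : EuclideanSpace ℝ (Fin n) → ℝ) (x : EuclideanSpace ℝ (Fin n)) :
    lap (fun y => c * f y) x = c * lap f x := by
  have hdir (e : EuclideanSpace ℝ (Fin n)) :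
      (fun y => fderiv ℝ (fun z => c * f z) y e) = c • fun y => fderiv ℝ f y e := by
    ext y
    change fderiv ℝ (c • f) y e = _
    simp [fderiv_const_smul_field]
  simp only [lap, hdir, fderiv_const_smul_field, Finset.mul_sum]
  rfl

theorem lap_neg (f : EuclideanSpace ℝ (Fin n) → ℝ) (x : EuclideanSpace ℝ (Fin n)) :
    lap (fun y => -f y) x = -lap f x := by
  simpa using lap_const_mul (-1) f x

theorem lap_sub {f g : EuclideanSpace ℝ (Fin n) → ℝ} (hf : ContDiff ℝ 2 f) (hg : ContDiff ℝ 2 g)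
    (x : EuclideanSpace ℝ (Fin n)) : lap (fun y => f y - g y) x = lap f x - lap g x := by
  have hdir (e : EuclideanSpace ℝ (Fin n)) :
      (fun y => fderiv ℝ (fun z => f z - g z) y e)
        = fun y => fderiv ℝ f y e - fderiv ℝ g y e := by
    ext y
    rw [fderiv_fun_sub (hf.differentiable two_ne_zero y) (hg.differentiable two_ne_zero y)]
    rfl
  simp only [lap, hdir, ← Finset.sum_sub_distrib]
  refine Finset.sum_congr rfl fun _ _ => ?_
  rw [fderiv_fun_sub (hf.differentiable_fderiv_apply _ x) (hg.differentiable_fderiv_apply _ x)]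
  rfl

theorem IsLocalMin.lap_nonneg {f : EuclideanSpace ℝ (Fin n) → ℝ} {a : EuclideanSpace ℝ (Fin n)}
    (h : IsLocalMin f a) (hf : ContDiff ℝ 2 f) : 0 ≤ lap f a :=
  Finset.sum_nonneg fun _ _ => h.fderiv_fderiv_apply_nonneg hf _

end Laplacian

section Periodic

variable {n : ℕ}

def periodAddSubgroup {G β : Type*} [AddGroup G] (f : G → β) : AddSubgroup G where
  carrier := {z | ∀ x, f (x + z) = f x}
  zero_mem' := by simp
  add_mem' {a b} ha hb x := by rw [← add_assoc, hb, ha]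
  neg_mem' {a} ha x := by rw [← ha (x + -a), neg_add_cancel_right]

theorem exists_mem_Qd_apply_eq_of_per {f : EuclideanSpace ℝ (Fin n) → ℝ} (hf : per f)
    (x : EuclideanSpace ℝ (Fin n)) : ∃ y ∈ Qd n, f y = f x := by
  set z := ∑ i, ⌊x i⌋ • eVec n i
  have he (i : Fin n) : eVec n i ∈ periodAddSubgroup f := fun y => hf y i
  have hz : z ∈ periodAddSubgroup f :=
    AddSubgroup.sum_mem _ fun i _ => AddSubgroup.zsmul_mem _ (he i) _
  refine ⟨x - z, fun i => ?_, by rw [← hz (x - z), sub_add_cancel]⟩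
  have hzi : z i = ⌊x i⌋ := by
    simp [z, eVec, Pi.single_apply]
  rw [PiLp.sub_apply, hzi]
  exact ⟨Int.fract_nonneg _, Int.fract_lt_one _⟩

theorem isCompact_closure_Qd : IsCompact (closure (Qd n)) := by
  have hcube : IsCompact ((EuclideanSpace.equiv (Fin n) ℝ) ⁻¹' Set.univ.pi fun _ => Set.Icc 0 1) :=
    (EuclideanSpace.equiv (Fin n) ℝ).toHomeomorph.isCompact_preimage.mpr
      (isCompact_univ_pi fun _ => isCompact_Icc)
  exact hcube.closure_of_subset fun x hx i _ => Set.Ico_subset_Icc_self (hx i)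

theorem Continuous.exists_forall_le_of_per {f : EuclideanSpace ℝ (Fin n) → ℝ}
    (hc : Continuous f) (hf : per f) : ∃ x₀, ∀ x, f x ≤ f x₀ := by
  have h0 : (0 : EuclideanSpace ℝ (Fin n)) ∈ Qd n := fun i => by simp
  obtain ⟨x₀, -, hmax⟩ :=
    isCompact_closure_Qd.exists_isMaxOn ⟨0, subset_closure h0⟩ hc.continuousOn
  refine ⟨x₀, fun x => ?_⟩
  obtain ⟨y, hy, hyx⟩ := exists_mem_Qd_apply_eq_of_per hf x
  exact hyx ▸ hmax (subset_closure hy)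

theorem Continuous.integrableOn_Qd {f : EuclideanSpace ℝ (Fin n) → ℝ} (hc : Continuous f) :
    IntegrableOn f (Qd n) :=
  (hc.continuousOn.integrableOn_compact isCompact_closure_Qd).mono_set subset_closure

end Periodic

section Landscape

variable {n : ℕ} {V u ψ : EuclideanSpace ℝ (Fin n) → ℝ} {lam : ℝ}

theorem le_lam_mul_of_isLocalMin_sub {m : ℝ} {x₀ : EuclideanSpace ℝ (Fin n)}
    (hu2 : ContDiff ℝ 2 u) (hψ2 : ContDiff ℝ 2 ψ)
    (hu : -lap u x₀ + V x₀ * u x₀ = 1) (hψ : -lap ψ x₀ + V x₀ * ψ x₀ = lam * ψ x₀)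
    (hmin : IsLocalMin (fun x => m * u x - ψ x) x₀) (htouch : ψ x₀ = m * u x₀) :
    m ≤ lam * ψ x₀ := by
  have hlap : 0 ≤ m * lap u x₀ - lap ψ x₀ := by
    rw [← lap_const_mul, ← lap_sub (contDiff_const.mul hu2) hψ2]
    exact hmin.lap_nonneg ((contDiff_const.mul hu2).sub hψ2)
  linear_combination hlap + hψ - m * hu - V x₀ * htouch

theorem le_of_lam_mul_le_one (hu2 : ContDiff ℝ 2 u) (huper : per u) (hupos : ∀ x, 0 < u x)
    (hu : ∀ x, -lap u x + V x * u x = 1) (hψ2 : ContDiff ℝ 2 ψ) (hψper : per ψ)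
    (hψ : ∀ x, -lap ψ x + V x * ψ x = lam * ψ x) (hbound : ∀ x, lam * ψ x ≤ 1)
    (x : EuclideanSpace ℝ (Fin n)) : ψ x ≤ u x := by
  have hratio : Continuous fun x => ψ x / u x :=
    hψ2.continuous.div hu2.continuous fun x => (hupos x).ne'
  obtain ⟨x₀, hmax⟩ :=
    hratio.exists_forall_le_of_per fun x i => congrArg₂ (· / ·) (hψper x i) (huper x i)
  set m := ψ x₀ / u x₀
  have hle (x) : ψ x ≤ m * u x := (div_le_iff₀ (hupos x)).mp (hmax x)
  have htouch : ψ x₀ = m * u x₀ := (div_mul_cancel₀ _ (hupos x₀).ne').symm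
  have hmin : IsLocalMin (fun x => m * u x - ψ x) x₀ :=
    Eventually.of_forall fun x => by linarith [hle x]
  have hm : m ≤ 1 := (le_lam_mul_of_isLocalMin_sub hu2 hψ2 (hu x₀) (hψ x₀) hmin htouch).trans (hbound x₀)
  exact (hle x).trans (mul_le_of_le_one_left (hupos x).le hm)

end Landscape

theorem landscape_domination_general (n : ℕ)
    (V u ψ : EuclideanSpace ℝ (Fin n) → ℝ) (lam : ℝ)
    (hu2 : ContDiff ℝ 2 u) (huper : per u) (hupos : ∀ x, 0 < u x)
    (hu : ∀ x, -lap u x + V x * u x = 1)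
    (hψ2 : ContDiff ℝ 2 ψ) (hψper : per ψ)
    (hψ : ∀ x, -lap ψ x + V x * ψ x = lam * ψ x)
    (hlam : 0 < lam)
    (hsup : (⨆ y, |ψ y|) = 1 / lam) :
    (∀ᵐ x ∂(volume : Measure (EuclideanSpace ℝ (Fin n))), |ψ x| ≤ u x)
      ∧ (∫ x in Qd n, (ψ x)^2) ≤ ∫ x in Qd n, (u x)^2 := by
  have hbdd : BddAbove (Set.range fun y => |ψ y|) := by
    obtain ⟨x₀, hmax⟩ :=
      hψ2.continuous.abs.exists_forall_le_of_per fun x i => congrArg abs (hψper x i)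
    exact ⟨_, Set.forall_mem_range.2 hmax⟩
  have hbound (y) : lam * |ψ y| ≤ 1 := by
    rw [mul_comm, ← le_div_iff₀ hlam, ← hsup]
    exact le_ciSup hbdd y
  have hupper := le_of_lam_mul_le_one hu2 huper hupos hu hψ2 hψper hψ
    fun y => (mul_le_mul_of_nonneg_left (le_abs_self _) hlam.le).trans (hbound y)
  have hlower := le_of_lam_mul_le_one (ψ := fun y => -ψ y) hu2 huper hupos hu hψ2.neg
    (fun x i => congrArg Neg.neg (hψper x i)) (fun x => by linear_combination -lap_neg ψ x - hψ x)
    fun y => (mul_le_mul_of_nonneg_left (neg_le_abs _) hlam.le).trans (hbound y)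
  have habs (x) : |ψ x| ≤ u x := abs_le.2 ⟨neg_le.1 (hlower x), hupper x⟩
  refine ⟨.of_forall habs, setIntegral_mono (hψ2.continuous.pow 2).integrableOn_Qd
    (hu2.continuous.pow 2).integrableOn_Qd fun x => ?_⟩
  exact sq_le_sq.2 ((habs x).trans (le_abs_self _))

/-- if `‖ψ‖_∞ = 1/λ` then `|ψ| ≤ u` a.e. and `‖ψ‖_{L²} ≤ ‖u‖_{L²}`. -/
theorem landscape_domination (n : ℕ)
    (V u ψ : EuclideanSpace ℝ (Fin n) → ℝ) (lam : ℝ)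
    (hVmeas : Measurable V) (hVbdd : ∃ M, ∀ x, |V x| ≤ M)
    (hVnonneg : ∀ x, 0 ≤ V x) (hVper : per V)
    (hVpos : 0 < volume {x | x ∈ Qd n ∧ 0 < V x})
    (hu2 : ContDiff ℝ 2 u) (huper : per u) (hupos : ∀ x, 0 < u x)
    (hu : ∀ x, -lap u x + V x * u x = 1)
    (hψ2 : ContDiff ℝ 2 ψ) (hψper : per ψ)
    (hψ : ∀ x, -lap ψ x + V x * ψ x = lam * ψ x)
    (hlam : 0 < lam)
    (hsup : (⨆ y, |ψ y|) = 1 / lam) :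
    (∀ᵐ x ∂(volume : Measure (EuclideanSpace ℝ (Fin n))), |ψ x| ≤ u x)
      ∧ (∫ x in Qd n, (ψ x)^2) ≤ ∫ x in Qd n, (u x)^2 :=
  landscape_domination_general n V u ψ lam hu2 huper hupos hu hψ2 hψper hψ hlam hsup
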